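/- If n, a, k₁, k₂ are integers with n = k₁(a+1) + k₂(a−1), 6 ≤ a ≤ ⌊n/2⌋ and a even, then β_b(C(n;1,a)) ≥ k₁·(a/2) + k₂·(a/2 − 1). -/

import Mathlib

/-!
Write `a = 2h`, `M = k₁ h + k₂ (h - 1)` and `K = k₁ + k₂`, so that `n = 2M + K` and
`(h - 1) K ≤ M ≤ h K`. The Beatty-type vertices `p i = 2i + ⌊iK/M⌋`, `0 ≤ i < M`, are pairwise
at distance at least 2, satisfy `p (i + M) = p i + n`, and, because `M / K` lies between `h - 1`
and `h`, no two of them differ by `2h` (cyclically). So they form an independent set of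
`C(n;1,2h)`, and broadcasting with strength 1 from each of them costs `M`.
-/

/-- The eccentricity of a vertex: maximum distance to any other vertex. -/
noncomputable def eccent {V : Type*} [Fintype V] (G : SimpleGraph V) (v : V) : ℕ :=
  Finset.univ.sup (fun u => G.dist v u)

/-- The diameter of a finite graph: maximum eccentricity. -/
noncomputable def graphDiam {V : Type*} [Fintype V] (G : SimpleGraph V) : ℕ :=
  Finset.univ.sup (fun v => eccent G v)

/-- `f` is an independent broadcast on `G`. -/
def IsIndepBroadcast {V : Type*} [Fintype V] (G : SimpleGraph V) (f : V → ℕ) : Prop :=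
  (∀ v, f v ≤ eccent G v) ∧
  ∀ u v : V, u ≠ v → 0 < f u → 0 < f v → max (f u) (f v) < G.dist u v

/-- The broadcast independence number: maximum cost of an independent broadcast. -/
noncomputable def betaB {V : Type*} [Fintype V] (G : SimpleGraph V) : ℕ :=
  sSup {k | ∃ f : V → ℕ, IsIndepBroadcast G f ∧ ∑ v, f v = k}

/-- The independence number: maximum size of an independent set. -/
noncomputable def alphaNum {V : Type*} [Fintype V] (G : SimpleGraph V) : ℕ :=
  sSup {k | ∃ s : Finset V, (∀ u ∈ s, ∀ v ∈ s, ¬ G.Adj u v) ∧ s.card = k}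

/-- The circulant graph `C(n;1,a)` on vertices `v_0,…,v_{n-1}` with edges
`v_i v_{i+1}` and `v_i v_{i+a}`, indices mod `n`. -/
def circulantGraph (n a : ℕ) : SimpleGraph (Fin n) :=
  SimpleGraph.fromRel (fun i j => (i.val + 1) % n = j.val ∨ (i.val + a) % n = j.val)

section Broadcast

variable {V : Type*} [Fintype V] {G : SimpleGraph V}

theorem sum_le_betaB {f : V → ℕ} (hf : IsIndepBroadcast G f) : ∑ v, f v ≤ betaB G := by
  refine le_csSup ⟨∑ v, eccent G v, ?_⟩ ⟨f, hf, rfl⟩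
  rintro k ⟨g, hg, rfl⟩
  exact Finset.sum_le_sum fun v _ => hg.1 v

theorem one_le_eccent [Nontrivial V] (hG : G.Preconnected) (v : V) :
    1 ≤ eccent G v := by
  obtain ⟨u, hu⟩ := exists_ne v
  exact ((hG v u).pos_dist_of_ne hu.symm).trans_le (Finset.le_sup (Finset.mem_univ u))

theorem card_le_betaB [Nontrivial V] (hG : G.Preconnected)
    {s : Finset V} (hs : G.IsIndepSet s) : s.card ≤ betaB G := by
  classical
  have hf : IsIndepBroadcast G fun v => if v ∈ s then 1 else 0 := by
    refine ⟨fun v => ?_, fun u v huv hu hv => ?_⟩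
    · dsimp only
      split_ifs
      exacts [one_le_eccent hG v, Nat.zero_le _]
    · have hu : u ∈ s := by by_contra h; simp [h] at hu
      have hv : v ∈ s := by by_contra h; simp [h] at hv
      simpa [hu, hv] using (hG u v).one_lt_dist_of_ne_of_not_adj huv (hs hu hv huv)
  simpa using sum_le_betaB hf

end Broadcast

theorem pathGraph_le_circulantGraph (n a : ℕ) : SimpleGraph.pathGraph n ≤ circulantGraph n a := by
  intro u v huv
  rw [SimpleGraph.pathGraph_adj] at huv
  refine ⟨fun h => by subst h; omega, ?_⟩
  rcases huv with h | h
  · exact Or.inl (Or.inl (by rw [Nat.mod_eq_of_lt (h ▸ v.isLt), h]))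
  · exact Or.inr (Or.inl (by rw [Nat.mod_eq_of_lt (h ▸ u.isLt), h]))

theorem circulantGraph_preconnected (n a : ℕ) : (circulantGraph n a).Preconnected :=
  (SimpleGraph.pathGraph_preconnected n).mono (pathGraph_le_circulantGraph n a)

theorem circulantGraph_adj_of_lt {n a : ℕ} (ha : a < n) {u v : Fin n} (huv : u < v)
    (hadj : (circulantGraph n a).Adj u v) :
    (v : ℕ) = u + 1 ∨ (v : ℕ) + 1 = u + n ∨ (v : ℕ) = u + a ∨ (v : ℕ) + a = u + n := by
  have hmod {x b : ℕ} (hx : x < n) (hb : b < n) :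
      (x + b) % n = x + b ∨ (x + b) % n + n = x + b := by
    rcases lt_or_ge (x + b) n with h | h
    · exact Or.inl (Nat.mod_eq_of_lt h)
    · rw [Nat.mod_eq_sub_mod h, Nat.mod_eq_of_lt (by omega)]
      omega
  have hu := u.isLt
  have hv := v.isLt
  have hn : 1 < n := by omega
  rw [Fin.lt_def] at huv
  obtain ⟨-, h | h⟩ := hadj <;> rcases h with h | h
  · rcases hmod hu hn with h' | h' <;> omega
  · rcases hmod hu ha with h' | h' <;> omega
  · rcases hmod hv hn with h' | h' <;> omega
  · rcases hmod hv ha with h' | h' <;> omega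

def balancedPos (M K i : ℕ) : ℕ := 2 * i + i * K / M

section BalancedPos

variable {M K i j : ℕ}

theorem balancedPos_add_two_le (hij : i < j) : balancedPos M K i + 2 ≤ balancedPos M K j := by
  have := Nat.div_le_div_right (c := M) (Nat.mul_le_mul_right K hij.le)
  unfold balancedPos
  omega

theorem balancedPos_strictMono : StrictMono (balancedPos M K) := fun _ _ hij => by
  have := balancedPos_add_two_le (M := M) (K := K) hij
  omega

theorem balancedPos_add_period (hM : 0 < M) (i : ℕ) :
    balancedPos M K (i + M) = balancedPos M K i + (2 * M + K) := by
  unfold balancedPos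
  rw [add_mul, mul_comm M K, Nat.add_mul_div_right _ _ hM]
  ring

theorem balancedPos_lt (hi : i < M) : balancedPos M K i < 2 * M + K := by
  have hM : 0 < M := by omega
  have hlt := balancedPos_add_two_le (M := M) (K := K) hi
  have hM' := balancedPos_add_period (K := K) hM 0
  simp only [balancedPos, zero_add, mul_zero, zero_mul, Nat.zero_div] at hlt hM' ⊢
  omega

/- Since `M / K` lies between `h - 1` and `h`, the term `i * K / M` increases on every window of `h`
consecutive indices and by at most one on every window of `h - 1`. -/
theorem balancedPos_ne_add_two_mul {h : ℕ} (hM : 0 < M) (hlo : h * K ≤ M + K) (hhi : M ≤ h * K) :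
    balancedPos M K j ≠ balancedPos M K i + 2 * h := by
  unfold balancedPos
  rcases le_or_gt (i + h) j with hj | hj
  · have : i * K / M + 1 ≤ j * K / M := by
      rw [← Nat.add_div_right _ hM]
      exact Nat.div_le_div_right (by nlinarith)
    omega
  · have : j * K / M ≤ i * K / M + 1 := by
      rw [← Nat.add_div_right _ hM]
      exact Nat.div_le_div_right (by nlinarith)
    omega

end BalancedPos

def balancedSet (n M K : ℕ) [NeZero n] : Finset (Fin n) :=
  (Finset.range M).image fun i => Fin.ofNat n (balancedPos M K i)

section BalancedSet

variable {n M K h : ℕ} [NeZero n]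

theorem val_balancedPos (hn : n = 2 * M + K) {i : ℕ} (hi : i < M) :
    (Fin.ofNat n (balancedPos M K i) : ℕ) = balancedPos M K i := by
  rw [Fin.val_ofNat, Nat.mod_eq_of_lt (hn ▸ balancedPos_lt hi)]

theorem card_balancedSet (hn : n = 2 * M + K) : (balancedSet n M K).card = M := by
  rw [balancedSet, Finset.card_image_of_injOn, Finset.card_range]
  intro i hi j hj hij
  rw [Finset.mem_coe, Finset.mem_range] at hi hj
  apply balancedPos_strictMono.injective
  rw [← val_balancedPos hn hi, ← val_balancedPos hn hj]
  exact congrArg Fin.val hij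

theorem circulantGraph_not_adj_balancedPos (hn : n = 2 * M + K) (ha : 2 * h < n)
    (hlo : h * K ≤ M + K) (hhi : M ≤ h * K) {i j : ℕ} (hij : i < j) (hj : j < M) :
    ¬(circulantGraph n (2 * h)).Adj
      (Fin.ofNat n (balancedPos M K i)) (Fin.ofNat n (balancedPos M K j)) := by
  have hM : 0 < M := by omega
  have hi : i < M := hij.trans hj
  have hwrap := balancedPos_add_period (K := K) hM i
  have hfwd := balancedPos_add_two_le (M := M) (K := K) hij
  have hbwd := balancedPos_add_two_le (M := M) (K := K) (show j < i + M by omega)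
  have hfwd' := balancedPos_ne_add_two_mul (i := i) (j := j) hM hlo hhi
  have hbwd' := balancedPos_ne_add_two_mul (i := j) (j := i + M) hM hlo hhi
  intro hadj
  have := circulantGraph_adj_of_lt ha
    (by rw [Fin.lt_def, val_balancedPos hn hi, val_balancedPos hn hj]; omega) hadj
  rw [val_balancedPos hn hi, val_balancedPos hn hj] at this
  omega

theorem circulantGraph_isIndepSet_balancedSet (hn : n = 2 * M + K) (ha : 2 * h < n)
    (hlo : h * K ≤ M + K) (hhi : M ≤ h * K) :
    (circulantGraph n (2 * h)).IsIndepSet (balancedSet n M K) := by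
  intro u hu v hv huv
  simp only [balancedSet, Finset.coe_image, Set.mem_image, Finset.mem_coe,
    Finset.mem_range] at hu hv
  obtain ⟨i, hi, rfl⟩ := hu
  obtain ⟨j, hj, rfl⟩ := hv
  rcases lt_trichotomy i j with hij | rfl | hij
  · exact circulantGraph_not_adj_balancedPos hn ha hlo hhi hij hj
  · exact absurd rfl huv
  · exact fun hadj => circulantGraph_not_adj_balancedPos hn ha hlo hhi hij hi hadj.symm

end BalancedSet

theorem stmt12 (n a k₁ k₂ : ℕ) (hn : n = k₁ * (a + 1) + k₂ * (a - 1))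
    (ha : 6 ≤ a) (han : a ≤ n / 2) (heven : Even a) :
    k₁ * (a / 2) + k₂ * (a / 2 - 1) ≤ betaB (circulantGraph n a) := by
  obtain ⟨h, rfl⟩ := heven
  obtain ⟨g, rfl⟩ : ∃ g, h = g + 1 := ⟨h - 1, by omega⟩
  have hn' : n = 2 * (k₁ * (g + 1) + k₂ * g) + (k₁ + k₂) := by
    rw [hn, show g + 1 + (g + 1) - 1 = 2 * g + 1 by omega]
    ring
  have : NeZero n := ⟨by omega⟩
  have : Nontrivial (Fin n) := Fin.nontrivial_iff_two_le.2 (by omega)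
  rw [show (g + 1 + (g + 1)) / 2 = g + 1 by omega, Nat.add_sub_cancel, ← two_mul,
    ← card_balancedSet hn']
  exact card_le_betaB (circulantGraph_preconnected n _)
    (circulantGraph_isIndepSet_balancedSet hn' (by omega) (by linarith) (by linarith))
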